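/- Let R be a commutative noetherian ring, let 𝔞 be an ideal of R, and let 𝒮 be a Serre subcategory of R-modules. Then the class 𝒮_𝔞 = {M : Γ_𝔞(M) = M and (0 :_M 𝔞) ∈ 𝒮 imply M ∈ 𝒮} is closed under extensions: if M is an R-module with a submodule N such that N ∈ 𝒮_𝔞 and M/N ∈ 𝒮_𝔞, then M ∈ 𝒮_𝔞. -/

import Mathlib

universe u

open Submodule

variable {R : Type u} [CommRing R]

/-- `Γ_a(M)`, the `a`-torsion submodule of `M`: the set of elements annihilated by
some power of the ideal `a`. -/
def torsionGamma (a : Ideal R) (M : Type u) [AddCommGroup M] [Module R M] :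
    Submodule R M :=
  ⨆ n : ℕ, Submodule.torsionBySet R M ((a ^ n : Ideal R) : Set R)

/-- The class `S` satisfies the condition `C_a` on the module `M`:
if `Γ_a(M) = M` and `(0 :_M a) ∈ S` then `M ∈ S`. -/
def CCondOn (S : ModuleCat.{u} R → Prop) (a : Ideal R) (M : ModuleCat.{u} R) : Prop :=
  torsionGamma a M = ⊤ →
    S (ModuleCat.of R (Submodule.torsionBySet R M (a : Set R))) → S M

/-- The class `S` satisfies the condition `C_a` (on every `R`-module). -/
def CCond (S : ModuleCat.{u} R → Prop) (a : Ideal R) : Prop :=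
  ∀ M : ModuleCat.{u} R, CCondOn S a M

/-- The class `S` is closed under isomorphisms of `R`-modules. -/
def IsoClosed (S : ModuleCat.{u} R → Prop) : Prop :=
  ∀ ⦃M N : ModuleCat.{u} R⦄, (M ≃ₗ[R] N) → S M → S N

/-- `S` is a Serre subcategory of the category of `R`-modules: it is closed under
isomorphisms, contains the zero module, and is closed under submodules, quotient modules
and extensions. -/
structure IsSerreClass (S : ModuleCat.{u} R → Prop) : Prop where
  iso : IsoClosed S
  zero : ∀ M : ModuleCat.{u} R, Subsingleton M → S M
  subobj : ∀ (M : ModuleCat.{u} R) (N : Submodule R M), S M → S (ModuleCat.of R N)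
  quot : ∀ (M : ModuleCat.{u} R) (N : Submodule R M), S M → S (ModuleCat.of R (M ⧸ N))
  extension : ∀ (M : ModuleCat.{u} R) (N : Submodule R M),
    S (ModuleCat.of R N) → S (ModuleCat.of R (M ⧸ N)) → S M

/-!
Let `M` be `𝔞`-torsion with `(0 :_M 𝔞) ∈ 𝒮`. Then `N` and `M/N` are `𝔞`-torsion and
`(0 :_N 𝔞) ⊆ (0 :_M 𝔞)`, so `N ∈ 𝒮`. The submodule `(0 :_{M/N} 𝔞)` is the image of
`L = (N :_M 𝔞)`; if `x₁, …, xₙ` generate `𝔞`, then `m ↦ (x₁ m, …, xₙ m)` maps `L` to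
`Nⁿ ∈ 𝒮` with kernel inside `(0 :_M 𝔞)`, so `L ∈ 𝒮`, hence `(0 :_{M/N} 𝔞) ∈ 𝒮` and `M/N ∈ 𝒮`.
Finally `M ∈ 𝒮` as an extension of `M/N` by `N`.
-/

namespace IsSerreClass

variable {S : ModuleCat.{u} R → Prop}
  {A B : Type u} [AddCommGroup A] [Module R A] [AddCommGroup B] [Module R B]

theorem of_injective (hS : IsSerreClass S) (f : A →ₗ[R] B)
    (hf : Function.Injective f) (hB : S (ModuleCat.of R B)) : S (ModuleCat.of R A) :=
  hS.iso (M := ModuleCat.of R (LinearMap.range f)) (N := ModuleCat.of R A)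
    (LinearEquiv.ofInjective f hf).symm (hS.subobj _ _ hB)

theorem of_surjective (hS : IsSerreClass S) (f : A →ₗ[R] B)
    (hf : Function.Surjective f) (hA : S (ModuleCat.of R A)) : S (ModuleCat.of R B) :=
  hS.iso (f.quotKerEquivOfSurjective hf) (hS.quot _ _ hA)

theorem of_ker (hS : IsSerreClass S) (f : A →ₗ[R] B)
    (hker : S (ModuleCat.of R (LinearMap.ker f))) (hB : S (ModuleCat.of R B)) :
    S (ModuleCat.of R A) :=
  hS.extension (ModuleCat.of R A) (LinearMap.ker f) hker
    (hS.iso (M := ModuleCat.of R (LinearMap.range f)) f.quotKerEquivRange.symm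
      (hS.subobj _ _ hB))

theorem prod (hS : IsSerreClass S) (hA : S (ModuleCat.of R A)) (hB : S (ModuleCat.of R B)) :
    S (ModuleCat.of R (A × B)) :=
  hS.of_ker (LinearMap.snd R A B)
    (hS.iso (M := ModuleCat.of R A)
      ((LinearEquiv.ofInjective _ LinearMap.inl_injective).trans
        (LinearEquiv.ofEq _ _ (LinearMap.range_inl R A B))) hA) hB

theorem pi_fin (hS : IsSerreClass S) (hA : S (ModuleCat.of R A)) :
    ∀ n : ℕ, S (ModuleCat.of R (Fin n → A))
  | 0 => hS.zero _ inferInstance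
  | n + 1 => hS.iso (M := ModuleCat.of R (A × (Fin n → A)))
      (Fin.consLinearEquiv R fun _ => A) (hS.prod hA (hS.pi_fin hA n))

end IsSerreClass

section Torsion

variable {a : Ideal R}
  {A B : Type u} [AddCommGroup A] [Module R A] [AddCommGroup B] [Module R B]

theorem mem_torsionGamma {x : A} : x ∈ torsionGamma a A ↔ ∃ n : ℕ, ∀ r ∈ a ^ n, r • x = 0 := by
  have hmono : Monotone fun n : ℕ => torsionBySet R A ((a ^ n : Ideal R) : Set R) :=
    fun i j hij => torsionBySet_le_torsionBySet_pow i j hij a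
  simp only [torsionGamma, Submodule.mem_iSup_of_directed _ hmono.directed_le,
    mem_torsionBySet_iff, Subtype.forall, SetLike.mem_coe]

theorem torsionGamma_eq_top_of_injective (f : A →ₗ[R] B) (hf : Function.Injective f)
    (hB : torsionGamma a B = ⊤) : torsionGamma a A = ⊤ := by
  refine eq_top_iff.mpr fun x _ => ?_
  obtain ⟨n, hn⟩ := mem_torsionGamma.mp (hB ▸ mem_top : f x ∈ torsionGamma a B)
  exact mem_torsionGamma.mpr ⟨n, fun r hr => hf (by rw [map_smul, hn r hr, map_zero])⟩

theorem torsionGamma_eq_top_of_surjective (f : A →ₗ[R] B) (hf : Function.Surjective f)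
    (hA : torsionGamma a A = ⊤) : torsionGamma a B = ⊤ := by
  refine eq_top_iff.mpr fun y _ => ?_
  obtain ⟨x, rfl⟩ := hf y
  obtain ⟨n, hn⟩ := mem_torsionGamma.mp (hA ▸ mem_top : x ∈ torsionGamma a A)
  exact mem_torsionGamma.mpr ⟨n, fun r hr => by rw [← map_smul, hn r hr, map_zero]⟩

theorem map_mem_torsionBySet (f : A →ₗ[R] B) {s : Set R} {x : A}
    (hx : x ∈ torsionBySet R A s) : f x ∈ torsionBySet R B s := by
  rw [mem_torsionBySet_iff] at hx ⊢
  exact fun r => by rw [← map_smul, hx r, map_zero]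

end Torsion

theorem IsSerreClass.comap_mkQ_torsionBySet {S : ModuleCat.{u} R → Prop} (hS : IsSerreClass S)
    {a : Ideal R} (ha : a.FG) {M : Type u} [AddCommGroup M] [Module R M] (N : Submodule R M)
    (hN : S (ModuleCat.of R N)) (hM : S (ModuleCat.of R (torsionBySet R M (a : Set R)))) :
    S (ModuleCat.of R (comap N.mkQ (torsionBySet R (M ⧸ N) (a : Set R)))) := by
  obtain ⟨n, g, hg⟩ := fg_iff_exists_fin_generating_family.mp ha
  set L := comap N.mkQ (torsionBySet R (M ⧸ N) (a : Set R))
  have hLN : ∀ m : L, ∀ r ∈ a, r • (m : M) ∈ N := fun m r hr => by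
    simpa [← Quotient.mk_smul, Quotient.mk_eq_zero] using
      (mem_torsionBySet_iff _ _).mp m.2 ⟨r, hr⟩
  let ψ : L →ₗ[R] Fin n → N := LinearMap.pi fun i =>
    (g i • L.subtype).codRestrict N fun m => hLN m _ (hg ▸ subset_span ⟨i, rfl⟩)
  have hker : ∀ m ∈ LinearMap.ker ψ, L.subtype m ∈ torsionBySet R M (a : Set R) := by
    intro m hm
    rw [← hg, ← Ideal.span, ← torsionBySet_eq_torsionBySet_span, mem_torsionBySet_iff]
    rintro ⟨_, i, rfl⟩
    have h := congrFun hm i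
    simp only [ψ, LinearMap.pi_apply, Pi.zero_apply, Subtype.ext_iff,
      ZeroMemClass.coe_zero] at h
    exact h
  refine hS.of_ker ψ (hS.of_injective (L.subtype.restrict hker) ?_ hM) (hS.pi_fin hN n)
  simp [disjoint_iff_inf_le]

/-- For a Serre subcategory `S` and an ideal `a`, the class
`S_a = {M : S satisfies C_a on M}` is closed under extensions. -/
theorem stmt14 [IsNoetherianRing R] (a : Ideal R)
    (S : ModuleCat.{u} R → Prop)
    (hS : IsSerreClass S)
    (M : ModuleCat.{u} R) (N : Submodule R M)
    (hN : CCondOn S a (ModuleCat.of R N))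
    (hQ : CCondOn S a (ModuleCat.of R (M ⧸ N))) :
    CCondOn S a M := by
  intro hM hAnn
  have hNS : S (ModuleCat.of R N) :=
    hN (torsionGamma_eq_top_of_injective N.subtype N.injective_subtype hM)
      (hS.of_injective (N.subtype.restrict fun _ => map_mem_torsionBySet N.subtype)
        (by simp) hAnn)
  have hAnnQ : S (ModuleCat.of R (torsionBySet R (M ⧸ N) (a : Set R))) := by
    refine hS.of_surjective (N.mkQ.restrict fun _ hx => hx) ?_
      (hS.comap_mkQ_torsionBySet (IsNoetherian.noetherian a) N hNS hAnn)
    rintro ⟨y, hy⟩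
    obtain ⟨x, rfl⟩ := N.mkQ_surjective y
    exact ⟨⟨x, hy⟩, rfl⟩
  exact hS.extension M N hNS
    (hQ (torsionGamma_eq_top_of_surjective N.mkQ N.mkQ_surjective hM) hAnnQ)
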